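/- arXiv:2407.08387 — 6 statements merged into one kernel-verified Lean document; each statement's English description precedes it below -/
import Mathlib

section
/- Let 0<M<∞, 1<K<∞, and ξ ∈ ∂𝔻. Then for every z in the open unit disc, z belongs to Γ_M(ξ) if and only if z belongs to Γ_{KM}((|z| + (1−|z|)/K)·ξ). In particular, Γ_1(ξ) ∩ D(0,r) ⊂ Γ_2(((1+r)/2)·ξ) for all 0<r<1 and ξ ∈ ∂𝔻. -/
open MeasureTheory Set
open scoped ENNReal NNReal

/-- Distance between arguments modulo 2π. -/
noncomputable def argDist (z w : ℂ) : ℝ :=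
  |Real.Angle.toReal ((Complex.arg z - Complex.arg w : ℝ) : Real.Angle)|

/-- The non-tangential approach region (cone) with vertex `ξ` and opening `M`. -/
noncomputable def cone (M : ℝ) (ξ : ℂ) : Set ℂ :=
  {z : ℂ | ‖z‖ < 1 ∧ argDist z ξ < M * (‖ξ‖ - ‖z‖)}

/-! Scaling the vertex `ξ` by a real `c > 0` does not change its argument, so membership in
`Γ_M(c ξ)` only compares `argDist z ξ` with `M (c - ‖z‖)`. The vertex `c = ‖z‖ + (1 - ‖z‖)/K`
is chosen so that `K (c - ‖z‖) = 1 - ‖z‖`. The second claim is the case `K = 2`, `M = 1`,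
followed by enlarging `c = (1 + ‖z‖)/2` to `(1 + r)/2`, which only widens the cone. -/

lemma argDist_ofReal_mul_right (z ξ : ℂ) {c : ℝ} (hc : 0 < c) :
    argDist z ((c : ℂ) * ξ) = argDist z ξ := by
  rw [argDist, argDist, Complex.arg_real_mul _ hc]

lemma mem_cone_ofReal_mul_iff {M c : ℝ} (hc : 0 < c) {ξ z : ℂ} :
    z ∈ cone M ((c : ℂ) * ξ) ↔ ‖z‖ < 1 ∧ argDist z ξ < M * (c * ‖ξ‖ - ‖z‖) := by
  rw [cone, mem_ofPred_eq, argDist_ofReal_mul_right z ξ hc, norm_mul, Complex.norm_real,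
    Real.norm_of_nonneg hc.le]

lemma cone_ofReal_mul_subset_of_le {M c c' : ℝ} (hM : 0 ≤ M) (hc : 0 < c) (hcc' : c ≤ c')
    (ξ : ℂ) : cone M ((c : ℂ) * ξ) ⊆ cone M ((c' : ℂ) * ξ) := by
  intro z hz
  rw [mem_cone_ofReal_mul_iff hc] at hz
  rw [mem_cone_ofReal_mul_iff (hc.trans_le hcc')]
  exact ⟨hz.1, hz.2.trans_le (by gcongr)⟩

theorem mem_cone_iff_mem_cone_rescaled {M K : ℝ} (hK : 0 < K) {ξ : ℂ} (hξ : ‖ξ‖ = 1) {z : ℂ}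
    (hz : ‖z‖ < 1) :
    z ∈ cone M ξ ↔ z ∈ cone (K * M) (((‖z‖ + (1 - ‖z‖) / K : ℝ) : ℂ) * ξ) := by
  have hc : 0 < ‖z‖ + (1 - ‖z‖) / K :=
    add_pos_of_nonneg_of_pos (norm_nonneg z) (div_pos (sub_pos.2 hz) hK)
  have height : K * M * ((‖z‖ + (1 - ‖z‖) / K) * 1 - ‖z‖) = M * (1 - ‖z‖) := by
    field_simp
    ring
  rw [mem_cone_ofReal_mul_iff hc, cone, mem_ofPred_eq, hξ, height]

theorem stmt1_general (M K : ℝ) (hK : 1 < K) (ξ : ℂ) (hξ : ‖ξ‖ = 1) :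
    (∀ z : ℂ, ‖z‖ < 1 →
      (z ∈ cone M ξ ↔
        z ∈ cone (K * M) (((‖z‖ + (1 - ‖z‖) / K : ℝ) : ℂ) * ξ))) ∧
    (∀ r : ℝ, 0 < r → r < 1 →
      cone 1 ξ ∩ Metric.ball (0 : ℂ) r ⊆ cone 2 ((((1 + r) / 2 : ℝ) : ℂ) * ξ)) := by
  refine ⟨fun z hz => mem_cone_iff_mem_cone_rescaled (zero_lt_one.trans hK) hξ hz, ?_⟩
  rintro r - - z ⟨hz, hzr⟩
  rw [mem_ball_zero_iff] at hzr
  have hz2 := (mem_cone_iff_mem_cone_rescaled two_pos hξ hz.1).1 hz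
  rw [mul_one] at hz2
  exact cone_ofReal_mul_subset_of_le zero_le_two (by linarith [norm_nonneg z, hz.1])
    (by linarith) ξ hz2

theorem stmt1 (M K : ℝ) (hM : 0 < M) (hK : 1 < K) (ξ : ℂ) (hξ : ‖ξ‖ = 1) :
    (∀ z : ℂ, ‖z‖ < 1 →
      (z ∈ cone M ξ ↔
        z ∈ cone (K * M) (((‖z‖ + (1 - ‖z‖) / K : ℝ) : ℂ) * ξ))) ∧
    (∀ r : ℝ, 0 < r → r < 1 →
      cone 1 ξ ∩ Metric.ball (0 : ℂ) r ⊆ cone 2 ((((1 + r) / 2 : ℝ) : ℂ) * ξ)) :=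
  stmt1_general M K hK ξ hξ
end

section
/- Let ω, ν : [0,1) → [0,∞) be integrable functions and ρ ∈ [0,1) such that the tail integrals satisfy ω̂(r) = ∫_r^1 ω(s)ds ≤ C ν̂(r) for all r ∈ [ρ,1) and some constant C > 0. Then for every non-decreasing function φ : [0,1) → [0,∞) one has ∫_ρ^1 φ(r)ω(r)dr ≤ C ∫_ρ^1 φ(r)ν(r)dr. -/
open MeasureTheory Set
open scoped ENNReal NNReal

lemma key_upper (ω ν : ℝ → ℝ) (ρ C : ℝ) (hρ : ρ ∈ Set.Ico (0 : ℝ) 1) (hC : 0 < C)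
    (hωnn : ∀ r, 0 ≤ ω r) (hνnn : ∀ r, 0 ≤ ν r)
    (hωint : IntegrableOn ω (Set.Ico 0 1)) (hνint : IntegrableOn ν (Set.Ico 0 1))
    (htail : ∀ r ∈ Set.Ico ρ 1, (∫ s in r..1, ω s) ≤ C * ∫ s in r..1, ν s)
    (S : Set ℝ) (hS : S ⊆ Set.Ico ρ 1)
    (hup : ∀ r ∈ S, ∀ r' ∈ Set.Ico ρ 1, r ≤ r' → r' ∈ S) :
    (∫⁻ r in S, ENNReal.ofReal (ω r)) ≤ ENNReal.ofReal C * ∫⁻ r in S, ENNReal.ofReal (ν r) := by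
  rcases S.eq_empty_or_nonempty with rfl | hne
  · simp
  set a := sInf S with ha
  have hbdd : BddBelow S := ⟨ρ, fun s hs => (hS hs).1⟩
  have haρ : ρ ≤ a := le_csInf hne fun s hs => (hS hs).1
  have ha0 : 0 ≤ a := le_trans hρ.1 haρ
  have ha1 : a < 1 := by
    obtain ⟨s, hs⟩ := hne
    exact lt_of_le_of_lt (csInf_le hbdd hs) (hS hs).2
  have hsub1 : Set.Ioo a 1 ⊆ S := by
    intro r hr
    obtain ⟨s, hsS, hsr⟩ := exists_lt_of_csInf_lt hne hr.1
    exact hup s hsS r ⟨le_trans (hS hsS).1 hsr.le, hr.2⟩ hsr.le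
  have hsub2 : S ⊆ Set.Ico a 1 := fun s hs => ⟨csInf_le hbdd hs, (hS hs).2⟩
  have hae : S =ᵐ[volume] Set.Ioo a 1 := by
    rw [MeasureTheory.ae_eq_set]
    constructor
    · refine measure_mono_null (fun x hx => ?_) (measure_singleton a)
      rcases hx with ⟨hx1, hx2⟩
      obtain ⟨hax, hx1'⟩ := hsub2 hx1
      simp only [Set.mem_Ioo, not_and, not_lt] at hx2
      have : x = a := le_antisymm (by
        rcases lt_or_eq_of_le hax with h | h
        · exact absurd hx1' (not_lt.mpr (hx2 h))
        · exact h.symm.le) hax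
      simp [this]
    · simpa using measure_mono_null (fun x hx => (hx.2 (hsub1 hx.1)).elim) (measure_empty)
  rw [setLIntegral_congr hae, setLIntegral_congr hae]
  have hIsub : Set.Ioo a 1 ⊆ Set.Ico (0:ℝ) 1 := fun x hx => ⟨le_trans ha0 hx.1.le, hx.2⟩
  have hωI : IntegrableOn ω (Set.Ioo a 1) := hωint.mono_set hIsub
  have hνI : IntegrableOn ν (Set.Ioo a 1) := hνint.mono_set hIsub
  have eω : (∫⁻ r in Set.Ioo a 1, ENNReal.ofReal (ω r)) = ENNReal.ofReal (∫ r in Set.Ioo a 1, ω r) :=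
    (MeasureTheory.ofReal_integral_eq_lintegral_ofReal hωI
      (Filter.Eventually.of_forall fun x => hωnn x)).symm
  have eν : (∫⁻ r in Set.Ioo a 1, ENNReal.ofReal (ν r)) = ENNReal.ofReal (∫ r in Set.Ioo a 1, ν r) :=
    (MeasureTheory.ofReal_integral_eq_lintegral_ofReal hνI
      (Filter.Eventually.of_forall fun x => hνnn x)).symm
  rw [eω, eν, ← ENNReal.ofReal_mul hC.le]
  apply ENNReal.ofReal_le_ofReal
  have hiω : (∫ r in Set.Ioo a 1, ω r) = ∫ s in a..1, ω s := by
    rw [intervalIntegral.integral_of_le ha1.le, MeasureTheory.integral_Ioc_eq_integral_Ioo]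
  have hiν : (∫ r in Set.Ioo a 1, ν r) = ∫ s in a..1, ν s := by
    rw [intervalIntegral.integral_of_le ha1.le, MeasureTheory.integral_Ioc_eq_integral_Ioo]
  rw [hiω, hiν]
  exact htail a ⟨haρ, ha1⟩

theorem stmt3 (ω ν : ℝ → ℝ) (ρ C : ℝ) (hρ : ρ ∈ Set.Ico (0 : ℝ) 1) (hC : 0 < C)
    (hωnn : ∀ r, 0 ≤ ω r) (hνnn : ∀ r, 0 ≤ ν r)
    (hωint : IntegrableOn ω (Set.Ico 0 1)) (hνint : IntegrableOn ν (Set.Ico 0 1))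
    (htail : ∀ r ∈ Set.Ico ρ 1, (∫ s in r..1, ω s) ≤ C * ∫ s in r..1, ν s)
    (φ : ℝ → ℝ) (hφmono : MonotoneOn φ (Set.Ico 0 1)) (hφnn : ∀ r, 0 ≤ φ r)
    (hφmeas : Measurable φ) :
    (∫⁻ r in Set.Ico ρ 1, ENNReal.ofReal (φ r * ω r)) ≤
      ENNReal.ofReal C * ∫⁻ r in Set.Ico ρ 1, ENNReal.ofReal (φ r * ν r) := by
  have hsub : Set.Ico ρ 1 ⊆ Set.Ico (0:ℝ) 1 := Set.Ico_subset_Ico_left hρ.1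
  have hωae : AEMeasurable (fun r => ENNReal.ofReal (ω r)) (volume.restrict (Set.Ico ρ 1)) :=
    ENNReal.measurable_ofReal.comp_aemeasurable
      (hωint.mono_set hsub).aestronglyMeasurable.aemeasurable
  have hνae : AEMeasurable (fun r => ENNReal.ofReal (ν r)) (volume.restrict (Set.Ico ρ 1)) :=
    ENNReal.measurable_ofReal.comp_aemeasurable
      (hνint.mono_set hsub).aestronglyMeasurable.aemeasurable
  set μω := (volume.restrict (Set.Ico ρ 1)).withDensity (fun r => ENNReal.ofReal (ω r)) with hμω
  set μν := (volume.restrict (Set.Ico ρ 1)).withDensity (fun r => ENNReal.ofReal (ν r)) with hμν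
  have hφae : Measurable (fun r => ENNReal.ofReal (φ r)) :=
    ENNReal.measurable_ofReal.comp hφmeas
  have e1 : (∫⁻ r in Set.Ico ρ 1, ENNReal.ofReal (φ r * ω r)) =
      ∫⁻ r, ENNReal.ofReal (φ r) ∂μω := by
    rw [hμω, lintegral_withDensity_eq_lintegral_mul₀ hωae hφae.aemeasurable]
    exact lintegral_congr fun r => by
      simp only [Pi.mul_apply]
      rw [mul_comm (φ r) (ω r), ENNReal.ofReal_mul (hωnn r)]
  have e2 : (∫⁻ r in Set.Ico ρ 1, ENNReal.ofReal (φ r * ν r)) =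
      ∫⁻ r, ENNReal.ofReal (φ r) ∂μν := by
    rw [hμν, lintegral_withDensity_eq_lintegral_mul₀ hνae hφae.aemeasurable]
    exact lintegral_congr fun r => by
      simp only [Pi.mul_apply]
      rw [mul_comm (φ r) (ν r), ENNReal.ofReal_mul (hνnn r)]
  rw [e1, e2,
    lintegral_eq_lintegral_meas_lt μω (Filter.Eventually.of_forall hφnn)
      hφmeas.aemeasurable,
    lintegral_eq_lintegral_meas_lt μν (Filter.Eventually.of_forall hφnn)
      hφmeas.aemeasurable,
    ← MeasureTheory.lintegral_const_mul' _ _ ENNReal.ofReal_ne_top]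
  apply lintegral_mono
  intro t
  have hms : MeasurableSet {a : ℝ | t < φ a} := measurableSet_lt measurable_const hφmeas
  dsimp only
  rw [withDensity_apply _ hms, withDensity_apply _ hms, Measure.restrict_restrict hms]
  exact key_upper ω ν ρ C hρ hC hωnn hνnn hωint hνint htail
    ({a : ℝ | t < φ a} ∩ Set.Ico ρ 1) Set.inter_subset_right
    (fun r hr r' hr' hle =>
      ⟨lt_of_lt_of_le hr.1 (hφmono ⟨le_trans hρ.1 hr.2.1, hr.2.2⟩
        ⟨le_trans hρ.1 hr'.1, hr'.2⟩ hle), hr'⟩)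
end

section
/- Let ω : [0,1) → [0,∞) be integrable with ω̂(r) = ∫_r^1 ω(s)ds > 0 for all r ∈ [0,1). Then the following are equivalent: (i) there exists C > 0 such that ω̂(r) ≤ C ω̂((1+r)/2) for all r ∈ [0,1); (ii) there exist C ≥ 1 and β > 0 such that ω̂(r) ≤ C ((1−r)/(1−t))^β ω̂(t) for all 0 ≤ r ≤ t < 1. -/
open MeasureTheory Set
open scoped ENNReal NNReal

theorem stmt4 (ω : ℝ → ℝ) (hnn : ∀ r, 0 ≤ ω r) (hint : IntegrableOn ω (Set.Ico 0 1))
    (hpos : ∀ r ∈ Set.Ico (0 : ℝ) 1, 0 < ∫ s in r..1, ω s) :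
    (∃ C > (0 : ℝ), ∀ r ∈ Set.Ico (0 : ℝ) 1,
        (∫ s in r..1, ω s) ≤ C * ∫ s in ((1 + r) / 2)..1, ω s) ↔
    (∃ C ≥ (1 : ℝ), ∃ β > (0 : ℝ), ∀ r t : ℝ, 0 ≤ r → r ≤ t → t < 1 →
        (∫ s in r..1, ω s) ≤ C * ((1 - r) / (1 - t)) ^ β * ∫ s in t..1, ω s) := by
  -- basic integrability facts
  have hIcc : IntegrableOn ω (Set.Icc 0 1) := by
    rwa [integrableOn_Icc_iff_integrableOn_Ico]
  have hII : ∀ a b : ℝ, 0 ≤ a → a ≤ 1 → 0 ≤ b → b ≤ 1 →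
      IntervalIntegrable ω MeasureTheory.volume a b := by
    intro a b ha ha1 hb hb1
    apply (hIcc.mono_set _).intervalIntegrable
    exact Set.uIcc_subset_Icc ⟨ha, ha1⟩ ⟨hb, hb1⟩
  have hnn' : ∀ a : ℝ, 0 ≤ a → a ≤ 1 → 0 ≤ ∫ s in a..1, ω s := by
    intro a ha ha1
    exact intervalIntegral.integral_nonneg ha1 (fun x _ => hnn x)
  have hmono : ∀ a b : ℝ, 0 ≤ a → a ≤ b → b ≤ 1 →
      (∫ s in b..1, ω s) ≤ ∫ s in a..1, ω s := by
    intro a b ha hab hb1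
    have h1 : (∫ s in a..b, ω s) + (∫ s in b..1, ω s) = ∫ s in a..1, ω s :=
      intervalIntegral.integral_add_adjacent_intervals
        (hII a b ha (hab.trans hb1) (ha.trans hab) hb1)
        (hII b 1 (ha.trans hab) hb1 (by norm_num) le_rfl)
    have h2 : 0 ≤ ∫ s in a..b, ω s :=
      intervalIntegral.integral_nonneg hab (fun x _ => hnn x)
    linarith
  constructor
  · rintro ⟨C0, hC0, h1⟩
    set C : ℝ := max C0 2 with hCdef
    have hC2 : (2:ℝ) ≤ C := le_max_right _ _
    have hC1 : (1:ℝ) ≤ C := by linarith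
    have hCpos : (0:ℝ) < C := by linarith
    have h1' : ∀ r ∈ Set.Ico (0:ℝ) 1,
        (∫ s in r..1, ω s) ≤ C * ∫ s in ((1 + r) / 2)..1, ω s := by
      intro r hr
      refine (h1 r hr).trans (mul_le_mul_of_nonneg_right (le_max_left _ _) ?_)
      obtain ⟨hr0, hr1⟩ := hr
      exact hnn' _ (by linarith) (by linarith)
    -- iterated doubling
    have key : ∀ n : ℕ, ∀ r : ℝ, 0 ≤ r → r < 1 →
        (∫ s in r..1, ω s) ≤ C ^ n * ∫ s in (1 - (1 - r) / 2 ^ n)..1, ω s := by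
      intro n
      induction n with
      | zero => intro r hr0 hr1; simp
      | succ m ih =>
        intro r hr0 hr1
        set r' : ℝ := 1 - (1 - r) / 2 ^ m with hr'def
        have h2m : (1:ℝ) ≤ 2 ^ m := one_le_pow₀ (by norm_num)
        have hr'0 : 0 ≤ r' := by
          rw [hr'def, sub_nonneg, div_le_one (by positivity)]
          linarith
        have hr'1 : r' < 1 := by
          rw [hr'def]
          have : 0 < (1 - r) / 2 ^ m := div_pos (by linarith) (by positivity)
          linarith
        have heq : (1 + r') / 2 = 1 - (1 - r) / 2 ^ (m + 1) := by
          rw [hr'def]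
          field_simp
          ring
        calc (∫ s in r..1, ω s) ≤ C ^ m * ∫ s in r'..1, ω s := ih r hr0 hr1
          _ ≤ C ^ m * (C * ∫ s in ((1 + r') / 2)..1, ω s) := by
              apply mul_le_mul_of_nonneg_left (h1' r' ⟨hr'0, hr'1⟩) (pow_nonneg hCpos.le m)
          _ = C ^ (m + 1) * ∫ s in (1 - (1 - r) / 2 ^ (m + 1))..1, ω s := by
              rw [heq]; ring
    set β : ℝ := Real.logb 2 C with hβdef
    have hβpos : 0 < β := Real.logb_pos one_lt_two (by linarith)
    have hCeq : (2:ℝ) ^ β = C := Real.rpow_logb two_pos (by norm_num) hCpos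
    refine ⟨C, hC1, β, hβpos, ?_⟩
    intro r t hr0 hrt ht1
    have hr1 : r < 1 := lt_of_le_of_lt hrt ht1
    have h1t : 0 < 1 - t := by linarith
    have h1r : 0 < 1 - r := by linarith
    set x : ℝ := (1 - r) / (1 - t) with hxdef
    have hx1 : 1 ≤ x := (one_le_div h1t).mpr (by linarith)
    have hxpos : 0 < x := by linarith
    set n : ℕ := ⌈Real.logb 2 x⌉₊ with hndef
    have hn : Real.logb 2 x ≤ (n : ℝ) := Nat.le_ceil _
    have h2n : x ≤ 2 ^ n := by
      calc x = (2:ℝ) ^ Real.logb 2 x := (Real.rpow_logb two_pos (by norm_num) hxpos).symm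
        _ ≤ (2:ℝ) ^ (n : ℝ) :=
            (Real.rpow_le_rpow_left_iff (by norm_num : (1:ℝ) < 2)).mpr hn
        _ = 2 ^ n := by rw [Real.rpow_natCast]
    have hrn : t ≤ 1 - (1 - r) / 2 ^ n := by
      have h2np : (0:ℝ) < 2 ^ n := by positivity
      rw [hxdef, div_le_iff₀ h1t] at h2n
      rw [le_sub_comm, div_le_iff₀ h2np]
      linarith
    have hrn1 : 1 - (1 - r) / 2 ^ n ≤ 1 := by
      have : 0 ≤ (1 - r) / 2 ^ n := by positivity
      linarith
    -- C^n ≤ C * x^β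
    have hnm : ((n - 1 : ℕ) : ℝ) ≤ Real.logb 2 x := by
      rcases Nat.eq_zero_or_pos n with h | h
      · simp [h]
        exact Real.logb_nonneg one_lt_two hx1
      · exact (Nat.lt_ceil.mp (by omega)).le
    have hCn1 : C ^ (n - 1) ≤ x ^ β := by
      calc C ^ (n - 1) = ((2:ℝ) ^ β) ^ ((n - 1 : ℕ) : ℝ) := by
            rw [hCeq, Real.rpow_natCast]
        _ = (2:ℝ) ^ (β * ((n - 1 : ℕ) : ℝ)) := by
            rw [← Real.rpow_mul (by norm_num : (0:ℝ) ≤ 2)]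
        _ ≤ (2:ℝ) ^ (Real.logb 2 x * β) := by
            apply (Real.rpow_le_rpow_left_iff (by norm_num : (1:ℝ) < 2)).mpr
            rw [mul_comm]
            exact mul_le_mul_of_nonneg_right hnm hβpos.le
        _ = x ^ β := by
            rw [Real.rpow_mul (by norm_num), Real.rpow_logb two_pos (by norm_num) hxpos]
    have hCn : C ^ n ≤ C * x ^ β := by
      have h1 : C ^ n ≤ C * C ^ (n - 1) := by
        rcases Nat.eq_zero_or_pos n with h | h
        · simp [h]; linarith
        · rw [← pow_succ']
          have : n - 1 + 1 = n := by omega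
          rw [this]
      refine h1.trans (mul_le_mul_of_nonneg_left hCn1 hCpos.le)
    calc (∫ s in r..1, ω s) ≤ C ^ n * ∫ s in (1 - (1 - r) / 2 ^ n)..1, ω s :=
          key n r hr0 hr1
      _ ≤ C ^ n * ∫ s in t..1, ω s := by
          apply mul_le_mul_of_nonneg_left _ (by positivity)
          exact hmono t _ (by linarith) hrn hrn1
      _ ≤ C * x ^ β * ∫ s in t..1, ω s := by
          apply mul_le_mul_of_nonneg_right hCn
          exact hnn' t (by linarith) (by linarith)
  · rintro ⟨C, hC1, β, hβpos, h2⟩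
    refine ⟨C * 2 ^ β, by positivity, ?_⟩
    intro r hr
    obtain ⟨hr0, hr1⟩ := hr
    have ht : (1 + r) / 2 < 1 := by linarith
    have hrt : r ≤ (1 + r) / 2 := by linarith
    have := h2 r ((1 + r) / 2) hr0 hrt ht
    have hrat : (1 - r) / (1 - (1 + r) / 2) = 2 := by
      rw [div_eq_iff (by linarith : (1:ℝ) - (1 + r) / 2 ≠ 0)]
      ring
    rwa [hrat] at this
end

section
/- Let ω : [0,1) → [0,∞) be integrable with strictly positive tail integral ω̂. Then the following are equivalent: (i) there exist K > 1 and C > 1 such that ω̂(r) ≥ C ω̂(1 − (1−r)/K) for all r ∈ [0,1); (ii) there exist C > 0 and α > 0 such that ω̂(s) ≤ C ((1−s)/(1−t))^α ω̂(t) for all 0 ≤ t ≤ s < 1. -/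
/-! Iterating (i) along the points `1 - (1 - t) / K ^ n` gives `ω̂ (1 - (1 - t) / K ^ n) ≤ C⁻ⁿ ω̂ t`;
choosing `n` with `K ^ n ≤ (1 - t) / (1 - s) < K ^ (n + 1)` and using that `ω̂` is antitone
yields (ii) with `α = log_K C`. Conversely, (ii) at `s = 1 - (1 - t) / K` reads
`ω̂ s ≤ C K^(-α) ω̂ t`, which is (i) with constant `2` once `K ^ α = 2 (C + 1)`. -/

open MeasureTheory Set

theorem antitoneOn_intervalIntegral_one {ω : ℝ → ℝ} (hnn : ∀ r, 0 ≤ ω r)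
    (hint : IntegrableOn ω (Ico 0 1)) : AntitoneOn (fun r => ∫ s in r..1, ω s) (Ico 0 1) := by
  intro a ha b hb hab
  refine intervalIntegral.integral_mono_interval hab hb.2.le le_rfl
    (Filter.Eventually.of_forall hnn) ?_
  rw [intervalIntegrable_iff_integrableOn_Ico_of_le ha.2.le]
  exact hint.mono_set (Ico_subset_Ico_left ha.1)

theorem one_sub_div_mem_Ico {t K : ℝ} (ht : t ∈ Ico 0 1) (hK : 1 ≤ K) :
    1 - (1 - t) / K ∈ Ico 0 1 := by
  have hpos : 0 < (1 - t) / K := div_pos (by linarith [ht.2]) (by linarith)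
  have hle : (1 - t) / K ≤ 1 - t := div_le_self (by linarith [ht.2]) hK
  constructor <;> linarith [ht.1]

section ReverseDoubling

variable {W : ℝ → ℝ} {K C : ℝ}

theorem mul_pow_le_of_reverseDoubling (hK : 1 ≤ K) (hC : 0 ≤ C)
    (h : ∀ r ∈ Ico (0 : ℝ) 1, C * W (1 - (1 - r) / K) ≤ W r) {t : ℝ} (ht : t ∈ Ico 0 1) :
    ∀ n : ℕ, C ^ n * W (1 - (1 - t) / K ^ n) ≤ W t
  | 0 => by simp
  | n + 1 => by
    set r := 1 - (1 - t) / K ^ n with hr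
    have hr_mem : r ∈ Ico 0 1 := one_sub_div_mem_Ico ht (one_le_pow₀ hK)
    have hnext : 1 - (1 - t) / K ^ (n + 1) = 1 - (1 - r) / K := by
      rw [hr, pow_succ]
      ring
    calc C ^ (n + 1) * W (1 - (1 - t) / K ^ (n + 1)) = C ^ n * (C * W (1 - (1 - r) / K)) := by
          rw [hnext]; ring
      _ ≤ C ^ n * W r := by gcongr; exact h r hr_mem
      _ ≤ W t := mul_pow_le_of_reverseDoubling hK hC h ht n

theorem le_mul_rpow_of_reverseDoubling (hK : 1 < K) (hC : 1 < C)
    (hW : AntitoneOn W (Ico 0 1)) (hW0 : ∀ r ∈ Ico (0 : ℝ) 1, 0 ≤ W r)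
    (h : ∀ r ∈ Ico (0 : ℝ) 1, C * W (1 - (1 - r) / K) ≤ W r)
    {t s : ℝ} (ht : 0 ≤ t) (hts : t ≤ s) (hs : s < 1) :
    W s ≤ C * ((1 - s) / (1 - t)) ^ Real.logb K C * W t := by
  set α := Real.logb K C
  have hs1 : 0 < 1 - s := by linarith
  have ht_mem : t ∈ Ico 0 1 := ⟨ht, hts.trans_lt hs⟩
  have hs_mem : s ∈ Ico 0 1 := ⟨ht.trans hts, hs⟩
  have hx : 1 ≤ (1 - t) / (1 - s) := (one_le_div hs1).2 (by linarith)
  obtain ⟨n, hKn, hKn1⟩ := exists_nat_pow_near hx hK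
  have hrn : 1 - (1 - t) / K ^ n ≤ s := by
    rw [le_div_iff₀ hs1] at hKn
    rw [sub_le_comm, le_div_iff₀ (by positivity)]
    linarith
  have hiter : C ^ n * W s ≤ W t :=
    (mul_le_mul_of_nonneg_left
      (hW (one_sub_div_mem_Ico ht_mem (one_le_pow₀ hK.le)) hs_mem hrn) (by positivity)).trans
      (mul_pow_le_of_reverseDoubling hK.le (by linarith) h ht_mem n)
  have hKα : K ^ α = C := Real.rpow_logb (by linarith) hK.ne' (by linarith)
  have hweight : (C ^ n)⁻¹ ≤ C * ((1 - s) / (1 - t)) ^ α := by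
    have hbound : ((1 - t) / (1 - s)) ^ α ≤ C ^ (n + 1) := by
      calc ((1 - t) / (1 - s)) ^ α ≤ (K ^ (n + 1)) ^ α :=
            Real.rpow_le_rpow (by linarith) hKn1.le (Real.logb_pos hK hC).le
        _ = C ^ (n + 1) := by rw [← Real.rpow_pow_comm (by linarith), hKα]
    rw [← inv_div, Real.inv_rpow (by positivity)]
    calc (C ^ n)⁻¹ = C * (C ^ (n + 1))⁻¹ := by rw [pow_succ]; field_simp
      _ ≤ C * (((1 - t) / (1 - s)) ^ α)⁻¹ := by gcongr
  calc W s = (C ^ n)⁻¹ * (C ^ n * W s) := by field_simp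
    _ ≤ (C ^ n)⁻¹ * W t := by gcongr
    _ ≤ C * ((1 - s) / (1 - t)) ^ α * W t := by gcongr; exact hW0 t ht_mem

theorem reverseDoubling_of_le_mul_rpow {α : ℝ} (hC : 0 < C) (hα : 0 < α)
    (hW0 : ∀ r ∈ Ico (0 : ℝ) 1, 0 ≤ W r)
    (h : ∀ t s : ℝ, 0 ≤ t → t ≤ s → s < 1 → W s ≤ C * ((1 - s) / (1 - t)) ^ α * W t) :
    ∃ K > (1 : ℝ), ∃ C' > (1 : ℝ), ∀ r ∈ Ico (0 : ℝ) 1, C' * W (1 - (1 - r) / K) ≤ W r := by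
  set K := (2 * (C + 1)) ^ α⁻¹
  have hK : 1 < K := Real.one_lt_rpow (by linarith) (inv_pos.2 hα)
  have hKα : K ^ α = 2 * (C + 1) := by
    rw [← Real.rpow_mul (by linarith), inv_mul_cancel₀ hα.ne', Real.rpow_one]
  refine ⟨K, hK, 2, one_lt_two, fun r hr => ?_⟩
  have hr1 : 0 < 1 - r := by linarith [hr.2]
  have hs := one_sub_div_mem_Ico hr hK.le
  have hratio : (1 - (1 - (1 - r) / K)) / (1 - r) = K⁻¹ := by
    field_simp
    ring
  have hstep := h r _ hr.1 (by linarith [div_le_self hr1.le hK.le]) hs.2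
  rw [hratio, Real.inv_rpow (by linarith), hKα] at hstep
  have hhalf : C * (2 * (C + 1))⁻¹ ≤ 1 / 2 := by
    rw [← div_eq_mul_inv, div_le_iff₀ (by linarith)]; linarith
  linarith [mul_le_mul_of_nonneg_right hhalf (hW0 r hr)]

end ReverseDoubling

theorem stmt5_general (ω : ℝ → ℝ) (hnn : ∀ r, 0 ≤ ω r) (hint : IntegrableOn ω (Set.Ico 0 1)) :
    (∃ K > (1 : ℝ), ∃ C > (1 : ℝ), ∀ r ∈ Set.Ico (0 : ℝ) 1,
        C * (∫ s in (1 - (1 - r) / K)..1, ω s) ≤ ∫ s in r..1, ω s) ↔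
    (∃ C > (0 : ℝ), ∃ α > (0 : ℝ), ∀ t s : ℝ, 0 ≤ t → t ≤ s → s < 1 →
        (∫ u in s..1, ω u) ≤ C * ((1 - s) / (1 - t)) ^ α * ∫ u in t..1, ω u) := by
  have hW0 : ∀ r ∈ Ico (0 : ℝ) 1, 0 ≤ ∫ s in r..1, ω s := fun r hr =>
    intervalIntegral.integral_nonneg hr.2.le fun u _ => hnn u
  constructor
  · rintro ⟨K, hK, C, hC, h⟩
    exact ⟨C, by linarith, Real.logb K C, Real.logb_pos hK hC, fun t s ht hts hs =>
      le_mul_rpow_of_reverseDoubling hK hC (antitoneOn_intervalIntegral_one hnn hint) hW0 h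
        ht hts hs⟩
  · rintro ⟨C, hC, α, hα, h⟩
    exact reverseDoubling_of_le_mul_rpow hC hα hW0 h

theorem stmt5 (ω : ℝ → ℝ) (hnn : ∀ r, 0 ≤ ω r) (hint : IntegrableOn ω (Set.Ico 0 1))
    (hpos : ∀ r ∈ Set.Ico (0 : ℝ) 1, 0 < ∫ s in r..1, ω s) :
    (∃ K > (1 : ℝ), ∃ C > (1 : ℝ), ∀ r ∈ Set.Ico (0 : ℝ) 1,
        C * (∫ s in (1 - (1 - r) / K)..1, ω s) ≤ ∫ s in r..1, ω s) ↔
    (∃ C > (0 : ℝ), ∃ α > (0 : ℝ), ∀ t s : ℝ, 0 ≤ t → t ≤ s → s < 1 →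
        (∫ u in s..1, ω u) ≤ C * ((1 - s) / (1 - t)) ^ α * ∫ u in t..1, ω u) :=
  stmt5_general ω hnn hint
end

section
/- Let 0 < p < ∞, 1 ≤ M < ∞, and let f : 𝔻 → ℂ be any function. Define N_M(f)(ξ) = sup_{z ∈ Γ_M(ξ)} |f(z)| for ξ in the closed unit disc, and Φ(re^{iθ}) = (1/(1−r)) ∫_{|t−θ|<1−r} N_M(f)(re^{it})^p dt. Then for each fixed θ ∈ ℝ, the map r ↦ Φ(re^{iθ}) is non-decreasing on [0,1). -/
/-!
Substituting `t = θ + (1 - r) K` turns `Φ(r e^{iθ})` into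
`∫_{-1}^{1} N_M(f)(r e^{i(θ + (1 - r) K)})^p dK`, so it suffices that the integrand is
non-decreasing in `r` for each `|K| < 1`. Moving from radius `r` to `s` along the spiral
`r ↦ r e^{i(θ + (1 - r) K)}` changes the argument by `(s - r) |K| ≤ M (s - r)`, which by the
triangle inequality for angular distance makes the cone at `r` a subset of the cone at `s`.
-/

open MeasureTheory Set
open scoped ENNReal NNReal

/-- The non-tangential maximal function of `f`, with values in `ℝ≥0∞`. -/
noncomputable def NM (M : ℝ) (f : ℂ → ℂ) (ξ : ℂ) : ℝ≥0∞ :=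
  ⨆ z ∈ cone M ξ, (‖f z‖₊ : ℝ≥0∞)

namespace Real.Angle

theorem abs_toReal_coe_le (x : ℝ) : |(x : Angle).toReal| ≤ |x| := by
  by_cases hx : -π < x ∧ x ≤ π
  · rw [toReal_coe_eq_self_iff.2 hx]
  · have : π ≤ |x| := by
      rw [not_and_or, not_lt, not_le] at hx
      rcases hx with hx | hx
      · exact le_abs.2 (Or.inr (by linarith))
      · exact le_abs.2 (Or.inl hx.le)
    exact (abs_toReal_le_pi _).trans this

theorem abs_toReal_add_le (a b : Angle) : |(a + b).toReal| ≤ |a.toReal| + |b.toReal| := by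
  calc |(a + b).toReal| = |((a.toReal + b.toReal : ℝ) : Angle).toReal| := by
        rw [coe_add, coe_toReal, coe_toReal]
    _ ≤ |a.toReal + b.toReal| := abs_toReal_coe_le _
    _ ≤ |a.toReal| + |b.toReal| := abs_add_le _ _

end Real.Angle

theorem argDist_triangle (z w v : ℂ) : argDist z v ≤ argDist z w + argDist w v := by
  unfold argDist
  rw [← sub_add_sub_cancel (Complex.arg z) (Complex.arg w), Real.Angle.coe_add]
  exact Real.Angle.abs_toReal_add_le _ _

theorem arg_ofReal_mul_exp_mul_I_coe_angle {r : ℝ} (hr : 0 < r) (α : ℝ) :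
    (Complex.arg (r * Complex.exp (α * Complex.I)) : Real.Angle) = α := by
  rw [Complex.arg_real_mul _ hr, Complex.arg_exp_mul_I, ← Real.Angle.toReal_coe,
    Real.Angle.coe_toReal]

theorem argDist_polar_le {r s : ℝ} (hr : 0 < r) (hs : 0 < s) (α β : ℝ) :
    argDist (r * Complex.exp (α * Complex.I)) (s * Complex.exp (β * Complex.I)) ≤ |α - β| := by
  unfold argDist
  rw [Real.Angle.coe_sub, arg_ofReal_mul_exp_mul_I_coe_angle hr,
    arg_ofReal_mul_exp_mul_I_coe_angle hs, ← Real.Angle.coe_sub]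
  exact Real.Angle.abs_toReal_coe_le _

theorem norm_ofReal_mul_exp_mul_I {r : ℝ} (hr : 0 ≤ r) (α : ℝ) :
    ‖(r : ℂ) * Complex.exp (α * Complex.I)‖ = r := by
  rw [norm_mul, Complex.norm_exp_ofReal_mul_I, mul_one, Complex.norm_of_nonneg hr]

theorem cone_subset_cone {M : ℝ} {ξ ξ' : ℂ} (h : argDist ξ ξ' ≤ M * (‖ξ'‖ - ‖ξ‖)) :
    cone M ξ ⊆ cone M ξ' := fun z ⟨hz, hzξ⟩ =>
  ⟨hz, by linarith [argDist_triangle z ξ ξ']⟩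

theorem cone_zero {M : ℝ} (hM : 0 ≤ M) : cone M 0 = ∅ := by
  refine eq_empty_of_forall_notMem fun z ⟨_, hz⟩ => ?_
  have : M * (‖(0 : ℂ)‖ - ‖z‖) ≤ 0 := by
    rw [norm_zero, zero_sub, mul_neg]
    exact neg_nonpos.2 (mul_nonneg hM (norm_nonneg z))
  exact (abs_nonneg _).not_gt (hz.trans_le this)

theorem cone_mono_along_spiral {M r s K : ℝ} (θ : ℝ) (hr : 0 ≤ r) (hrs : r ≤ s) (hK : |K| ≤ M) :
    cone M (r * Complex.exp (((θ + (1 - r) * K : ℝ) : ℂ) * Complex.I)) ⊆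
      cone M (s * Complex.exp (((θ + (1 - s) * K : ℝ) : ℂ) * Complex.I)) := by
  rcases hr.eq_or_lt with rfl | hr
  · simp [cone_zero ((abs_nonneg K).trans hK)]
  apply cone_subset_cone
  rw [norm_ofReal_mul_exp_mul_I hr.le, norm_ofReal_mul_exp_mul_I (hr.trans_le hrs).le]
  calc _ ≤ |(θ + (1 - r) * K) - (θ + (1 - s) * K)| := argDist_polar_le hr (hr.trans_le hrs) _ _
    _ = (s - r) * |K| := by rw [← abs_of_nonneg (sub_nonneg.2 hrs), ← abs_mul]; ring_nf
    _ ≤ M * (s - r) := by nlinarith [sub_nonneg.2 hrs]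

theorem NM_mono_of_cone_subset {M : ℝ} (f : ℂ → ℂ) {ξ ξ' : ℂ} (h : cone M ξ ⊆ cone M ξ') :
    NM M f ξ ≤ NM M f ξ' :=
  biSup_mono h

theorem ofReal_one_div_mul_setLIntegral_Ioo_sub_add {c : ℝ} (hc : 0 < c) (θ : ℝ)
    (g : ℝ → ℝ≥0∞) :
    ENNReal.ofReal (1 / c) * ∫⁻ t in Ioo (θ - c) (θ + c), g t =
      ∫⁻ K in Ioo (-1) 1, g (θ + c * K) := by
  set φ : ℝ → ℝ := fun K => θ + c * K
  have hφ : MeasurableEmbedding φ :=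
    ((Homeomorph.mulLeft₀ c hc.ne').trans (Homeomorph.addLeft θ)).measurableEmbedding
  have hmp : MeasurePreserving φ (ENNReal.ofReal c • volume) volume := by
    refine ⟨hφ.measurable, ?_⟩
    have hscale := Real.smul_map_volume_mul_left hc.ne'
    rw [abs_of_pos hc] at hscale
    change Measure.map ((θ + ·) ∘ (c * ·)) _ = _
    rw [← Measure.map_map (measurable_const_add θ) (measurable_const_mul c), Measure.map_smul,
      hscale, map_add_left_eq_self]
  have hpre : φ ⁻¹' Ioo (θ - c) (θ + c) = Ioo (-1) 1 := by
    ext K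
    simp only [φ, mem_preimage, mem_Ioo]
    constructor <;> rintro ⟨h1, h2⟩ <;> constructor <;> nlinarith
  rw [← hmp.setLIntegral_comp_preimage_emb hφ, hpre, Measure.restrict_smul,
    lintegral_smul_measure, smul_eq_mul, ← mul_assoc, ← ENNReal.ofReal_mul (by positivity),
    one_div_mul_cancel hc.ne', ENNReal.ofReal_one, one_mul]

theorem stmt7 (p M : ℝ) (hp : 0 < p) (hM : 1 ≤ M) (f : ℂ → ℂ) (θ : ℝ) :
    ∀ r s : ℝ, 0 ≤ r → r ≤ s → s < 1 →
      ENNReal.ofReal (1 / (1 - r)) *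
        (∫⁻ t in Set.Ioo (θ - (1 - r)) (θ + (1 - r)),
          (NM M f ((r : ℝ) * Complex.exp ((t : ℂ) * Complex.I))) ^ p) ≤
      ENNReal.ofReal (1 / (1 - s)) *
        (∫⁻ t in Set.Ioo (θ - (1 - s)) (θ + (1 - s)),
          (NM M f ((s : ℝ) * Complex.exp ((t : ℂ) * Complex.I))) ^ p) := by
  intro r s hr hrs hs
  rw [ofReal_one_div_mul_setLIntegral_Ioo_sub_add (by linarith),
    ofReal_one_div_mul_setLIntegral_Ioo_sub_add (by linarith)]
  refine setLIntegral_mono' measurableSet_Ioo fun K hK => ENNReal.rpow_le_rpow ?_ hp.le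
  have hKM : |K| ≤ M := (abs_lt.2 hK).le.trans hM
  exact NM_mono_of_cone_subset f (cone_mono_along_spiral θ hr hrs hKM)
end

section
/- Let 0 < p < q < ∞ and let ω be a radial weight. Define f(re^{iθ}) = (1−r)^{1/p} / (|θ|^{1/q} ω(r)^{1/p}) when ω(r)θ ≠ 0 (with θ ∈ (−π,π]) and f = 0 otherwise. Then f belongs to the tent space T^q_p(ω) but not to the mixed norm space L^q_p(ω), i.e., ‖f‖_{T^q_p(ω)} < ∞ while ‖f‖_{L^q_p(ω)} = ∞. -/
open MeasureTheory Set
open scoped ENNReal NNReal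

/-- The mixed norm `L^q_p(ω)` quasinorm. -/
noncomputable def Lqp (p q : ℝ) (ω : ℝ → ℝ) (f : ℂ → ℂ) : ℝ≥0∞ :=
  (ENNReal.ofReal (1 / (2 * Real.pi)) *
    ∫⁻ θ in Set.Ico (0 : ℝ) (2 * Real.pi),
      (∫⁻ r in Set.Ico (0 : ℝ) 1,
        ((‖f ((r : ℂ) * Complex.exp ((θ : ℂ) * Complex.I))‖₊ : ℝ≥0∞)) ^ p *
          ENNReal.ofReal (ω r * r)) ^ (q / p)) ^ (1 / q)

/-- The tent space `T^q_p(ω)` quasinorm. -/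
noncomputable def Tqp (p q : ℝ) (ω : ℝ → ℝ) (f : ℂ → ℂ) : ℝ≥0∞ :=
  (ENNReal.ofReal (1 / (2 * Real.pi)) *
    ∫⁻ θ in Set.Ico (0 : ℝ) (2 * Real.pi),
      (∫⁻ z in cone 1 (Complex.exp ((θ : ℂ) * Complex.I)),
        ((‖f z‖₊ : ℝ≥0∞)) ^ p *
          ENNReal.ofReal (ω (‖z‖) / (1 - ‖z‖))) ^ (q / p)) ^ (1 / q)

/-- The test function `f(re^{iθ}) = (1-r)^{1/p} θ^{-1/q} ω(r)^{-1/p}`. -/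
noncomputable def fTest (p q : ℝ) (ω : ℝ → ℝ) (z : ℂ) : ℂ :=
  if ω (‖z‖) = 0 ∨ Complex.arg z = 0 then 0
  else (((1 - ‖z‖) ^ (1 / p) /
    (|Complex.arg z| ^ (1 / q) * (ω (‖z‖)) ^ (1 / p)) : ℝ) : ℂ)

/-! Off the set where `ω(|z|) = 0`, `|f(z)|^p ω(|z|) = (1 - |z|) |arg z|^{-p/q}`.
In the tent norm the factor `1 - |z|` cancels, so each cone integral is at most the integral
of `|arg z|^{-p/q}` over the disc, which is finite in polar coordinates because `p/q < 1`.
In the mixed norm the radial integral along the ray of angle `θ ∈ (0, π)` is `θ^{-p/q} c`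
with `c > 0`, and its `(q/p)`-th power `c^{q/p} / θ` is not integrable at `0`. -/

lemma enorm_fTest_rpow_mul {p q : ℝ} (hp : 0 < p) {ω : ℝ → ℝ} (hnn : ∀ r, 0 ≤ ω r)
    {z : ℂ} (hz : ‖z‖ ≤ 1) (hω : ω ‖z‖ ≠ 0) (harg : z.arg ≠ 0) :
    ‖fTest p q ω z‖ₑ ^ p * ENNReal.ofReal (ω ‖z‖) =
      ENNReal.ofReal ((1 - ‖z‖) * |z.arg| ^ (-(p / q))) := by
  have ht : 0 ≤ 1 - ‖z‖ := sub_nonneg.2 hz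
  have hx : 0 < |z.arg| := abs_pos.2 harg
  have hw : 0 < ω ‖z‖ := (hnn _).lt_of_ne' hω
  rw [fTest, if_neg (by tauto), ← ofReal_norm, Complex.norm_real,
    Real.norm_of_nonneg (by positivity), ENNReal.ofReal_rpow_of_nonneg (by positivity) hp.le,
    ← ENNReal.ofReal_mul (by positivity)]
  congr 1
  rw [Real.div_rpow (by positivity) (by positivity),
    Real.mul_rpow (by positivity) (by positivity), ← Real.rpow_mul ht, ← Real.rpow_mul hx.le,
    ← Real.rpow_mul hw.le, one_div_mul_cancel hp.ne', Real.rpow_one, Real.rpow_one,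
    Real.rpow_neg hx.le, one_div_mul_eq_div]
  field_simp

lemma enorm_fTest_rpow_mul_div_le {p q : ℝ} (hp : 0 < p) {ω : ℝ → ℝ} (hnn : ∀ r, 0 ≤ ω r)
    (z : ℂ) :
    ‖fTest p q ω z‖ₑ ^ p * ENNReal.ofReal (ω ‖z‖ / (1 - ‖z‖)) ≤
      ENNReal.ofReal (|z.arg| ^ (-(p / q))) := by
  by_cases hf : ω ‖z‖ = 0 ∨ z.arg = 0
  · simp [fTest, if_pos hf, ENNReal.zero_rpow_of_pos hp]
  push Not at hf
  rcases lt_or_ge ‖z‖ 1 with hz | hz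
  · rw [ENNReal.ofReal_div_of_pos (sub_pos.2 hz), ← mul_div_assoc,
      enorm_fTest_rpow_mul hp hnn hz.le hf.1 hf.2, ENNReal.ofReal_mul (sub_pos.2 hz).le,
      mul_comm, ENNReal.mul_div_cancel_right (by simpa using hz) ENNReal.ofReal_ne_top]
  · rw [ENNReal.ofReal_of_nonpos (div_nonpos_of_nonneg_of_nonpos (hnn _) (by linarith)),
      mul_zero]
    exact zero_le

lemma lintegral_abs_rpow_neg_Ioo_lt_top {a b : ℝ} (ha : a < 1) (hb : 0 < b) :
    ∫⁻ θ in Ioo (-b) b, ENNReal.ofReal (|θ| ^ (-a)) < ⊤ := by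
  have hpos : IntervalIntegrable (fun θ : ℝ => |θ| ^ (-a)) volume 0 b :=
    (intervalIntegrable_iff_integrableOn_Ioo_of_le hb.le).2 <|
      ((intervalIntegral.integrableOn_Ioo_rpow_iff (s := -a) hb).2 (by linarith)).congr_fun
        (fun θ hθ => by rw [abs_of_pos hθ.1]) measurableSet_Ioo
  have hneg : IntervalIntegrable (fun θ : ℝ => |θ| ^ (-a)) volume (-b) 0 := by
    simpa using ((IntervalIntegrable.iff_comp_neg (by finiteness)).1 hpos).symm
  exact ((intervalIntegrable_iff_integrableOn_Ioo_of_le (by linarith)).1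
    (hneg.trans hpos)).lintegral_lt_top

open Real in
lemma lintegral_ball_abs_arg_rpow_neg_lt_top {a : ℝ} (ha : a < 1) :
    ∫⁻ z in Metric.ball (0 : ℂ) 1, ENNReal.ofReal (|z.arg| ^ (-a)) < ⊤ := by
  set F : ℝ → ℝ≥0∞ := fun θ => ENNReal.ofReal (|θ| ^ (-a))
  have hF : Measurable F := by fun_prop
  calc ∫⁻ z in Metric.ball (0 : ℂ) 1, F z.arg
      = ∫⁻ p in polarCoord.target, ENNReal.ofReal p.1 •
          (Metric.ball (0 : ℂ) 1).indicator (F ∘ Complex.arg) (Complex.polarCoord.symm p) := by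
        rw [Complex.lintegral_comp_polarCoord_symm,
          lintegral_indicator Metric.isOpen_ball.measurableSet]
        rfl
    _ ≤ ∫⁻ p in Ioo (0 : ℝ) 1 ×ˢ Ioo (-π) π, F p.2 := by
        rw [← lintegral_indicator polarCoord.open_target.measurableSet,
          ← lintegral_indicator (measurableSet_Ioo.prod measurableSet_Ioo)]
        refine lintegral_mono fun p => ?_
        by_cases hp : p ∈ polarCoord.target
        swap
        · rw [indicator_of_notMem hp]
          exact zero_le
        obtain ⟨hnorm, harg⟩ : ‖Complex.polarCoord.symm p‖ = p.1 ∧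
            (Complex.polarCoord.symm p).arg = p.2 :=
          Prod.ext_iff.1 <|
            (Complex.polarCoord_apply _).symm.trans (Complex.polarCoord.right_inv hp)
        rw [indicator_of_mem hp, smul_eq_mul]
        by_cases h1 : p.1 < 1
        · have hball : Complex.polarCoord.symm p ∈ Metric.ball (0 : ℂ) 1 := by
            rwa [Metric.mem_ball, dist_zero_right, hnorm]
          rw [indicator_of_mem hball, indicator_of_mem
            (show p ∈ Ioo (0 : ℝ) 1 ×ˢ Ioo (-π) π from ⟨⟨hp.1, h1⟩, hp.2⟩),
            Function.comp_apply, harg]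
          exact mul_le_of_le_one_left' (ENNReal.ofReal_le_one.2 h1.le)
        · have hball : Complex.polarCoord.symm p ∉ Metric.ball (0 : ℂ) 1 := by
            rwa [Metric.mem_ball, dist_zero_right, hnorm]
          rw [indicator_of_notMem hball, mul_zero]
          exact zero_le
    _ = volume (Ioo (0 : ℝ) 1) * ∫⁻ θ in Ioo (-π) π, F θ := by
        rw [Measure.volume_eq_prod, ← Measure.prod_restrict, lintegral_prod _ (by fun_prop)]
        simp
    _ < ⊤ := ENNReal.mul_lt_top (by simp) (lintegral_abs_rpow_neg_Ioo_lt_top ha pi_pos)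

lemma cone_subset_ball (M : ℝ) (ξ : ℂ) : cone M ξ ⊆ Metric.ball 0 1 := fun z hz => by
  simpa using hz.1

lemma Tqp_fTest_lt_top {p q : ℝ} (hp : 0 < p) (hpq : p < q) {ω : ℝ → ℝ} (hnn : ∀ r, 0 ≤ ω r) :
    Tqp p q ω (fTest p q ω) < ⊤ := by
  have hq : 0 < q := hp.trans hpq
  set B := ∫⁻ z in Metric.ball (0 : ℂ) 1, ENNReal.ofReal (|z.arg| ^ (-(p / q)))
  have hB : B < ⊤ := lintegral_ball_abs_arg_rpow_neg_lt_top ((div_lt_one hq).2 hpq)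
  have hcone : ∀ θ : ℝ, ∫⁻ z in cone 1 (Complex.exp (θ * Complex.I)),
      ‖fTest p q ω z‖ₑ ^ p * ENNReal.ofReal (ω ‖z‖ / (1 - ‖z‖)) ≤ B := fun θ =>
    (lintegral_mono (enorm_fTest_rpow_mul_div_le hp hnn)).trans
      (lintegral_mono_set (cone_subset_ball _ _))
  refine ENNReal.rpow_lt_top_of_nonneg (by positivity)
    (ENNReal.mul_ne_top ENNReal.ofReal_ne_top ?_)
  refine ne_top_of_le_ne_top ?_ (lintegral_mono fun θ =>
    ENNReal.rpow_le_rpow (hcone θ) (div_nonneg hq.le hp.le))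
  rw [setLIntegral_const, Real.volume_Ico]
  exact ENNReal.mul_ne_top (ENNReal.rpow_ne_top_of_nonneg (div_nonneg hq.le hp.le) hB.ne)
    ENNReal.ofReal_ne_top

lemma lintegral_ofReal_inv_Ioo_eq_top {b : ℝ} (hb : 0 < b) :
    ∫⁻ θ in Ioo 0 b, ENNReal.ofReal θ⁻¹ = ⊤ := by
  by_contra h
  rw [← Ne, lintegral_ofReal_ne_top_iff_integrable (by fun_prop)
    ((ae_restrict_iff' measurableSet_Ioo).2 (.of_forall fun θ hθ => inv_nonneg.2 hθ.1.le))] at h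
  have := (intervalIntegrable_iff_integrableOn_Ioo_of_le hb.le).2 h
  simp [hb.ne] at this

open Complex in
lemma enorm_fTest_ofReal_mul_exp_rpow_mul {p q : ℝ} (hp : 0 < p) {ω : ℝ → ℝ}
    (hnn : ∀ r, 0 ≤ ω r) {r θ : ℝ} (hr : r ∈ Ioo 0 1) (hθ : θ ∈ Ioo 0 Real.pi) :
    ‖fTest p q ω (r * exp (θ * I))‖ₑ ^ p * ENNReal.ofReal (ω r * r) =
      ENNReal.ofReal (θ ^ (-(p / q))) *
        {r | ω r ≠ 0}.indicator (fun r => ENNReal.ofReal ((1 - r) * r)) r := by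
  have hnorm : ‖(r : ℂ) * exp (θ * I)‖ = r := by
    rw [norm_mul, norm_real, norm_exp_ofReal_mul_I, mul_one, Real.norm_of_nonneg hr.1.le]
  have harg : ((r : ℂ) * exp (θ * I)).arg = θ := by
    rw [arg_real_mul _ hr.1, exp_mul_I,
      arg_cos_add_sin_mul_I ⟨by linarith [hθ.1, Real.pi_pos], hθ.2.le⟩]
  by_cases hω : ω r = 0
  · simp [hω]
  have hf := enorm_fTest_rpow_mul (q := q) hp hnn (hnorm.trans_le hr.2.le) (by rwa [hnorm])
    (by rw [harg]; exact hθ.1.ne')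
  rw [hnorm, harg, abs_of_pos hθ.1] at hf
  rw [indicator_of_mem hω, ENNReal.ofReal_mul (hnn r), ← mul_assoc, hf,
    ← ENNReal.ofReal_mul (by nlinarith [hr.2, Real.rpow_nonneg hθ.1.le (-(p / q))]),
    ← ENNReal.ofReal_mul (Real.rpow_nonneg hθ.1.le _)]
  ring_nf

open Complex in
lemma setLIntegral_fTest_ray {p q : ℝ} (hp : 0 < p) {ω : ℝ → ℝ} (hnn : ∀ r, 0 ≤ ω r)
    {θ : ℝ} (hθ : θ ∈ Ioo 0 Real.pi) :
    ∫⁻ r in Ico (0 : ℝ) 1,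
        ‖fTest p q ω ((r : ℂ) * exp ((θ : ℂ) * I))‖ₑ ^ p * ENNReal.ofReal (ω r * r) =
      ENNReal.ofReal (θ ^ (-(p / q))) *
        ∫⁻ r in Ioo 0 1, {r | ω r ≠ 0}.indicator (fun r => ENNReal.ofReal ((1 - r) * r)) r := by
  rw [setLIntegral_congr Ioo_ae_eq_Ico.symm, ← lintegral_const_mul' _ _ ENNReal.ofReal_ne_top]
  exact setLIntegral_congr_fun measurableSet_Ioo fun r hr =>
    enorm_fTest_ofReal_mul_exp_rpow_mul hp hnn hr hθ

lemma setLIntegral_indicator_ne_zero_pos {ω : ℝ → ℝ} (hm : Measurable ω)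
    (hnz : ¬ (∀ᵐ r ∂(volume.restrict (Set.Ico (0 : ℝ) 1)), ω r = 0)) :
    0 < ∫⁻ r in Ioo 0 1, {r | ω r ≠ 0}.indicator (fun r => ENNReal.ofReal ((1 - r) * r)) r := by
  have hS : MeasurableSet {r | ω r ≠ 0} := (hm (measurableSet_singleton 0)).compl
  rw [← Measure.restrict_congr_set Ioo_ae_eq_Ico, ae_iff, Measure.restrict_apply hS] at hnz
  rw [setLIntegral_pos_iff (Measurable.indicator (by fun_prop) hS)]
  refine (pos_iff_ne_zero.2 hnz).trans_le (measure_mono fun r ⟨hω, hr⟩ => ⟨?_, hr⟩)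
  rw [Function.mem_support, indicator_of_mem hω]
  exact (ENNReal.ofReal_pos.2 (mul_pos (sub_pos.2 hr.2) hr.1)).ne'

lemma Lqp_fTest_eq_top {p q : ℝ} (hp : 0 < p) (hpq : p < q) {ω : ℝ → ℝ} (hm : Measurable ω)
    (hnn : ∀ r, 0 ≤ ω r) (hnz : ¬ (∀ᵐ r ∂(volume.restrict (Set.Ico (0 : ℝ) 1)), ω r = 0)) :
    Lqp p q ω (fTest p q ω) = ⊤ := by
  have hq : 0 < q := hp.trans hpq
  have hqp : 0 < q / p := div_pos hq hp
  set c := ∫⁻ r in Ioo 0 1, {r | ω r ≠ 0}.indicator (fun r => ENNReal.ofReal ((1 - r) * r)) r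
  have hc : c ^ (q / p) ≠ 0 :=
    (ENNReal.rpow_pos_of_nonneg (setLIntegral_indicator_ne_zero_pos hm hnz) hqp.le).ne'
  have hray : ∀ θ ∈ Ioo 0 Real.pi, (∫⁻ r in Ico (0 : ℝ) 1,
      ‖fTest p q ω ((r : ℂ) * Complex.exp ((θ : ℂ) * Complex.I))‖ₑ ^ p *
        ENNReal.ofReal (ω r * r)) ^ (q / p) = ENNReal.ofReal θ⁻¹ * c ^ (q / p) := by
    intro θ hθ
    rw [setLIntegral_fTest_ray hp hnn hθ, ENNReal.mul_rpow_of_nonneg _ _ hqp.le,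
      ENNReal.ofReal_rpow_of_pos (Real.rpow_pos_of_pos hθ.1 _), ← Real.rpow_mul hθ.1.le,
      show -(p / q) * (q / p) = -1 by field_simp [hq.ne'], Real.rpow_neg_one]
  have houter : ∫⁻ θ in Ico 0 (2 * Real.pi), (∫⁻ r in Ico (0 : ℝ) 1,
      ‖fTest p q ω ((r : ℂ) * Complex.exp ((θ : ℂ) * Complex.I))‖ₑ ^ p *
        ENNReal.ofReal (ω r * r)) ^ (q / p) = ⊤ := by
    refine top_le_iff.1 ?_
    calc ⊤ = ∫⁻ θ in Ioo 0 Real.pi, ENNReal.ofReal θ⁻¹ * c ^ (q / p) := by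
          rw [lintegral_mul_const _ (by fun_prop), lintegral_ofReal_inv_Ioo_eq_top Real.pi_pos,
            ENNReal.top_mul hc]
      _ = _ := (setLIntegral_congr_fun measurableSet_Ioo hray).symm
      _ ≤ _ := lintegral_mono_set <|
        Ioo_subset_Ico_self.trans (Ico_subset_Ico_right (by linarith [Real.pi_pos]))
  simp_rw [Lqp, ← enorm_eq_nnnorm]
  rw [houter, ENNReal.mul_top (by simp [Real.pi_pos]), ENNReal.top_rpow_of_pos (by positivity)]

theorem stmt9_general (p q : ℝ) (hp : 0 < p) (hpq : p < q)
    (ω : ℝ → ℝ) (hm : Measurable ω) (hnn : ∀ r, 0 ≤ ω r)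
    (hnz : ¬ (∀ᵐ r ∂(volume.restrict (Set.Ico (0 : ℝ) 1)), ω r = 0)) :
    Tqp p q ω (fTest p q ω) < ⊤ ∧ Lqp p q ω (fTest p q ω) = ⊤ :=
  ⟨Tqp_fTest_lt_top hp hpq hnn, Lqp_fTest_eq_top hp hpq hm hnn hnz⟩

theorem stmt9 (p q : ℝ) (hp : 0 < p) (hpq : p < q)
    (ω : ℝ → ℝ) (hm : Measurable ω) (hnn : ∀ r, 0 ≤ ω r)
    (hint : IntegrableOn ω (Set.Ico 0 1))
    (hnz : ¬ (∀ᵐ r ∂(volume.restrict (Set.Ico (0 : ℝ) 1)), ω r = 0)) :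
    Tqp p q ω (fTest p q ω) < ⊤ ∧ Lqp p q ω (fTest p q ω) = ⊤ :=
  stmt9_general p q hp hpq ω hm hnn hnz
end
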